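/- Let A be a D×D real symmetric matrix with eigenvalues λ₁ ≥ λ₂ ≥ ... ≥ λ_D. Define μ = tr(A)/D and σ² = tr(A²)/D − (tr(A)/D)². Then λ₁ ≤ μ + √(D−1)·σ. -/

import Mathlib

/-!
The trace conditions say that `μ` and `σ²` are the mean and the variance of the eigenvalues, so the
bound is a statement about `D` real numbers. For a fixed `λᵢ`, the other `D - 1` numbers sum to
`Dμ - λᵢ`, and Cauchy–Schwarz bounds the square of that sum by `D - 1` times their sum of squares;
rearranged, this is `(λᵢ - μ)² ≤ (D - 1) σ²`.
-/

open Finset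

theorem Matrix.IsHermitian.trace_mul_self_eq_sum_sq_eigenvalues {𝕜 n : Type*} [RCLike 𝕜]
    [Fintype n] [DecidableEq n] {A : Matrix n n 𝕜} (hA : A.IsHermitian) :
    (A * A).trace = ∑ i, (hA.eigenvalues i : 𝕜) ^ 2 := by
  conv_lhs => rw [hA.spectral_theorem, ← map_mul, Unitary.conjStarAlgAut_apply,
    trace_mul_cycle, Unitary.coe_star_mul_self, one_mul]
  simp [diagonal_mul_diagonal, trace_diagonal, sq]

theorem sq_card_mul_sub_sum_le {ι : Type*} [Fintype ι] (x : ι → ℝ) (i : ι) :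
    (Fintype.card ι * x i - ∑ j, x j) ^ 2 ≤
      (Fintype.card ι - 1) * (Fintype.card ι * ∑ j, x j ^ 2 - (∑ j, x j) ^ 2) := by
  classical
  have hcard : ((univ.erase i).card : ℝ) = Fintype.card ι - 1 := by
    rw [card_erase_of_mem (mem_univ i), card_univ, Nat.cast_pred (Fintype.card_pos_iff.mpr ⟨i⟩)]
  have hCS := sq_sum_le_card_mul_sum_sq (s := univ.erase i) (f := x)
  rw [hcard] at hCS
  -- Splitting off `x i`, with `s, q` the sum and the sum of squares of the other coordinates,
  -- right side minus left side is `card ι * ((card ι - 1) * q - s ^ 2)`.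
  rw [← add_sum_erase _ _ (mem_univ i), ← add_sum_erase _ (fun j ↦ x j ^ 2) (mem_univ i)]
  nlinarith [mul_nonneg (Nat.cast_nonneg (Fintype.card ι) : (0:ℝ) ≤ _) (sub_nonneg.mpr hCS)]

theorem le_mean_add_sqrt_mul_std {ι : Type*} [Fintype ι] (x : ι → ℝ) (i : ι) {σ : ℝ}
    (hσ : σ ^ 2 = (∑ j, x j ^ 2) / Fintype.card ι - ((∑ j, x j) / Fintype.card ι) ^ 2)
    (hσ0 : 0 ≤ σ) :
    x i ≤ (∑ j, x j) / Fintype.card ι + √(Fintype.card ι - 1) * σ := by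
  set n : ℝ := (Fintype.card ι : ℝ)
  have hn : 1 ≤ n := Nat.one_le_cast.mpr (Fintype.card_pos_iff.mpr ⟨i⟩)
  have hsq : (x i - (∑ j, x j) / n) ^ 2 ≤ (√(n - 1) * σ) ^ 2 := by
    rw [mul_pow, Real.sq_sqrt (by linarith), hσ]
    calc (x i - (∑ j, x j) / n) ^ 2 = (n * x i - ∑ j, x j) ^ 2 / n ^ 2 := by field_simp
      _ ≤ (n - 1) * (n * ∑ j, x j ^ 2 - (∑ j, x j) ^ 2) / n ^ 2 := by
        gcongr
        exact sq_card_mul_sub_sum_le x i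
      _ = (n - 1) * ((∑ j, x j ^ 2) / n - ((∑ j, x j) / n) ^ 2) := by field_simp
  linarith [(abs_le_of_sq_le_sq' hsq (by positivity)).2]

theorem wolkowicz_styan_upper_bound_general {D : ℕ}
    (A : Matrix (Fin D) (Fin D) ℝ) (hA : A.IsHermitian)
    (μ σ : ℝ)
    (hμ : μ = A.trace / D)
    (hσ : σ ^ 2 = (A * A).trace / D - (A.trace / D) ^ 2)
    (hσ0 : 0 ≤ σ) :
    ∀ i : Fin D, hA.eigenvalues i ≤ μ + Real.sqrt ((D : ℝ) - 1) * σ := by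
  intro i
  have htr : A.trace = ∑ j, hA.eigenvalues j := by simpa using hA.trace_eq_sum_eigenvalues
  have htr2 : (A * A).trace = ∑ j, hA.eigenvalues j ^ 2 := by
    simpa using hA.trace_mul_self_eq_sum_sq_eigenvalues
  rw [htr, htr2] at hσ
  rw [hμ, htr]
  simpa using le_mean_add_sqrt_mul_std hA.eigenvalues i (by simpa using hσ) hσ0

theorem wolkowicz_styan_upper_bound {D : ℕ} (hD : 1 ≤ D)
    (A : Matrix (Fin D) (Fin D) ℝ) (hA : A.IsHermitian)
    (μ σ : ℝ)
    (hμ : μ = A.trace / D)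
    (hσ : σ ^ 2 = (A * A).trace / D - (A.trace / D) ^ 2)
    (hσ0 : 0 ≤ σ) :
    ∀ i : Fin D, hA.eigenvalues i ≤ μ + Real.sqrt ((D : ℝ) - 1) * σ :=
  wolkowicz_styan_upper_bound_general A hA μ σ hμ hσ hσ0
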